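/- Consider the Game of Graph Nim played on a galaxy graph G consisting of k pairwise-vertex-disjoint star graphs with centres u₁, …, u_k, where the i-th star has rays to vertices u_{i,1}, …, u_{i,ℓᵢ}. A configuration of edge weights is a losing position for the player to move if and only if the bitwise XOR of the numbers p₁, …, p_k is zero, where pᵢ is the sum of the weights of all edges of the i-th star. -/

import Mathlib

namespace GraphNim

variable {V E : Type} [Fintype E]

/-- A legal move in the Game of Graph Nim: choose a vertex `v` and weakly decrease
the weights of edges incident to `v` (all other edges unchanged), strictly
decreasing the total weight. -/
def Move (inc : V → E → Prop) (w w' : E → ℕ) : Prop :=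
  ∃ v : V, (∀ e, w' e ≤ w e) ∧ (∀ e, ¬ inc v e → w' e = w e) ∧
    (∑ e, w' e) < (∑ e, w e)

/-- A configuration is losing for the player to move: every legal move leads to a
non-losing configuration (the all-zero configuration is vacuously losing). -/
def Losing (inc : V → E → Prop) (w : E → ℕ) : Prop :=
  ∀ w', Move inc w w' → ¬ Losing inc w'
termination_by ∑ e, w e
decreasing_by
  rename_i h
  obtain ⟨v, _, _, h3⟩ := h
  exact h3

/-- A configuration is winning for the player to move: some legal move leads to a
losing configuration. -/
def Winning (inc : V → E → Prop) (w : E → ℕ) : Prop :=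
  ∃ w', Move inc w w' ∧ Losing inc w'

end GraphNim

open GraphNim

/-- Incidence of the galaxy graph consisting of `n` pairwise-vertex-disjoint star
graphs, where the `i`-th star has centre `Sum.inl i` and rays to the leaves
`Sum.inr ⟨i, t⟩` for `t : Fin (ℓ i)`; the edge `⟨i, t⟩` joins the centre of the
`i`-th star to its `t`-th leaf. -/
def galaxyInc (n : ℕ) (ℓ : Fin n → ℕ)
    (v : Fin n ⊕ Σ i : Fin n, Fin (ℓ i)) (e : Σ i : Fin n, Fin (ℓ i)) : Prop :=
  v = Sum.inl e.1 ∨ v = Sum.inr e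

/-!
A move at a vertex of the `i`-th star only touches edges of that star, so it lowers the star
total `pᵢ` and leaves the other totals alone; conversely, the centre of the `i`-th star can lower
`pᵢ` to any smaller value. Graph Nim on a galaxy is therefore Nim with piles `p₁, …, pₖ`, and
Bouton's argument applies: a move changes exactly one pile, hence the Nim-sum, and from a nonzero
Nim-sum some pile can be lowered to make it zero.
-/

theorem Fintype.sum_update_lt_sum_iff {ι M : Type*} [Fintype ι] [DecidableEq ι]
    [AddCommMonoid M] [PartialOrder M] [IsOrderedCancelAddMonoid M] (f : ι → M) (i : ι) (m : M) :
    ∑ j, Function.update f i m j < ∑ j, f j ↔ m < f i := by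
  rw [Finset.sum_update_of_mem (Finset.mem_univ i), Finset.sdiff_singleton_eq_erase,
    ← Finset.add_sum_erase _ _ (Finset.mem_univ i), add_lt_add_iff_right]

theorem Finset.exists_le_sum_eq {ι : Type*} [DecidableEq ι] (s : Finset ι) (f : ι → ℕ) {m : ℕ}
    (hm : m ≤ ∑ i ∈ s, f i) : ∃ g ≤ f, ∑ i ∈ s, g i = m := by
  induction s using Finset.induction_on generalizing m with
  | empty => exact ⟨0, fun _ => Nat.zero_le _, (Nat.le_zero.1 (by simpa using hm)).symm⟩
  | insert a s ha ih =>
    rw [Finset.sum_insert ha] at hm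
    obtain ⟨g, hgf, hg⟩ := ih (min_le_right m (∑ i ∈ s, f i))
    refine ⟨Function.update g a (m - min m (∑ i ∈ s, f i)), Pi.le_def.2 fun j => ?_, ?_⟩
    · rcases eq_or_ne j a with rfl | hj
      · rw [Function.update_self]
        omega
      · rw [Function.update_of_ne hj]
        exact hgf j
    · rw [Finset.sum_insert ha, Function.update_self, Finset.sum_update_of_notMem ha, hg]
      omega

namespace GraphNim

def nimSum {n : ℕ} (p : Fin n → ℕ) : ℕ :=
  (List.ofFn p).foldr (· ^^^ ·) 0

theorem nimSum_succ {n : ℕ} (p : Fin (n + 1) → ℕ) :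
    nimSum p = p 0 ^^^ nimSum (Fin.tail p) := by
  simp only [nimSum, List.ofFn_succ, List.foldr_cons]
  rfl

theorem nimSum_update {n : ℕ} (p : Fin n → ℕ) (i : Fin n) (m : ℕ) :
    nimSum (Function.update p i m) = nimSum p ^^^ p i ^^^ m := by
  induction n with
  | zero => exact i.elim0
  | succ n ih =>
    rw [nimSum_succ, nimSum_succ p]
    induction i using Fin.cases with
    | zero =>
      rw [Function.update_self, Fin.tail_update_zero, xor_comm (p 0), xor_cancel_right]
      exact xor_comm _ _
    | succ i =>
      rw [Function.update_of_ne (Fin.succ_ne_zero i).symm, Fin.tail_update_succ, ih]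
      simp only [Fin.tail]
      ac_rfl

/-- Lowering pile `i` to `a ^^^ nimSum p ^^^ p i` changes the Nim-sum to `a`. -/
theorem exists_xor_lt_of_lt_nimSum {n : ℕ} (p : Fin n → ℕ) {a : ℕ} (ha : a < nimSum p) :
    ∃ i, a ^^^ nimSum p ^^^ p i < p i := by
  induction n generalizing a with
  | zero => simp [nimSum] at ha
  | succ n ih =>
    rw [nimSum_succ] at ha ⊢
    rcases Nat.lt_xor_cases ha with h | h
    · refine ⟨0, ?_⟩
      rwa [xor_comm (p 0), ← xor_assoc, xor_cancel_right]
    · obtain ⟨i, hi⟩ := ih (Fin.tail p) h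
      refine ⟨i.succ, ?_⟩
      rw [← xor_assoc]
      exact hi

variable {V E : Type} [Fintype E]

theorem Move.sum_lt {inc : V → E → Prop} {w w' : E → ℕ} (h : Move inc w w') :
    ∑ e, w' e < ∑ e, w e :=
  h.choose_spec.2.2

theorem losing_iff_nimSum_eq_zero (inc : V → E → Prop) {n : ℕ} (pile : (E → ℕ) → Fin n → ℕ)
    (exists_update_of_move : ∀ w w', Move inc w w' →
      ∃ i, ∃ m < pile w i, pile w' = Function.update (pile w) i m)
    (exists_move_of_lt : ∀ w i, ∀ m < pile w i,
      ∃ w', Move inc w w' ∧ pile w' = Function.update (pile w) i m)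
    (w : E → ℕ) :
    Losing inc w ↔ nimSum (pile w) = 0 := by
  rw [Losing]
  constructor
  · intro hlosing
    by_contra hne
    obtain ⟨i, hi⟩ := exists_xor_lt_of_lt_nimSum (pile w) (Nat.pos_of_ne_zero hne)
    obtain ⟨w', hmove, hw'⟩ := exists_move_of_lt w i _ hi
    refine hlosing w' hmove ((losing_iff_nimSum_eq_zero inc pile
      exists_update_of_move exists_move_of_lt w').2 ?_)
    rw [hw', nimSum_update, zero_xor, LawfulXor.xor_self]
  · intro hzero w' hmove hlosing'
    obtain ⟨i, m, hm, hw'⟩ := exists_update_of_move w w' hmove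
    have := (losing_iff_nimSum_eq_zero inc pile exists_update_of_move exists_move_of_lt w').1
      hlosing'
    rw [hw', nimSum_update, hzero, zero_xor, xor_eq_zero_iff] at this
    exact hm.ne' this
termination_by ∑ e, w e
decreasing_by all_goals exact hmove.sum_lt

end GraphNim

section Galaxy

variable {n : ℕ} {ℓ : Fin n → ℕ}

def starWeight (w : (Σ i : Fin n, Fin (ℓ i)) → ℕ) (i : Fin n) : ℕ :=
  ∑ t, w ⟨i, t⟩

theorem sum_eq_sum_starWeight (w : (Σ i : Fin n, Fin (ℓ i)) → ℕ) :
    ∑ e, w e = ∑ i, starWeight w i :=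
  Fintype.sum_sigma w

theorem galaxyInc.fst_eq {v : Fin n ⊕ Σ i : Fin n, Fin (ℓ i)} {e : Σ i : Fin n, Fin (ℓ i)}
    (h : galaxyInc n ℓ v e) : e.1 = Sum.elim id Sigma.fst v := by
  rcases h with rfl | rfl <;> rfl

theorem exists_starWeight_eq_update_of_move {w w' : (Σ i : Fin n, Fin (ℓ i)) → ℕ}
    (h : Move (galaxyInc n ℓ) w w') :
    ∃ i, ∃ m < starWeight w i, starWeight w' = Function.update (starWeight w) i m := by
  obtain ⟨v, -, hfix, hlt⟩ := h
  set i := Sum.elim id Sigma.fst v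
  have hupdate : starWeight w' = Function.update (starWeight w) i (starWeight w' i) := by
    refine Function.eq_update_iff.2 ⟨rfl, fun j hj => Finset.sum_congr rfl fun t _ => ?_⟩
    exact hfix ⟨j, t⟩ fun hinc => hj hinc.fst_eq
  refine ⟨i, starWeight w' i, ?_, hupdate⟩
  rwa [sum_eq_sum_starWeight, sum_eq_sum_starWeight, hupdate,
    Fintype.sum_update_lt_sum_iff] at hlt

theorem exists_move_starWeight_eq_update (w : (Σ i : Fin n, Fin (ℓ i)) → ℕ) (i : Fin n)
    {m : ℕ} (hm : m < starWeight w i) :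
    ∃ w', Move (galaxyInc n ℓ) w w' ∧ starWeight w' = Function.update (starWeight w) i m := by
  obtain ⟨g, hgw, hg⟩ := Finset.univ.exists_le_sum_eq (fun t => w ⟨i, t⟩) hm.le
  let w' : (Σ i : Fin n, Fin (ℓ i)) → ℕ := fun e =>
    Function.update (fun j t => w ⟨j, t⟩) i g e.1 e.2
  have hstar : starWeight w' = Function.update (starWeight w) i m := by
    rw [← hg]
    exact funext <|
      Function.apply_update (fun j (f : Fin (ℓ j) → ℕ) => ∑ t, f t) (fun j t => w ⟨j, t⟩) i g
  refine ⟨w', ⟨Sum.inl i, fun ⟨j, t⟩ => ?_, fun ⟨j, t⟩ hinc => ?_, ?_⟩, hstar⟩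
  · rcases eq_or_ne j i with rfl | hj
    · simp only [w', Function.update_self]
      exact hgw t
    · simp only [w', Function.update_of_ne hj, le_refl]
  · have hj : j ≠ i := fun hj => hinc (Or.inl (congrArg Sum.inl hj.symm))
    simp only [w', Function.update_of_ne hj]
  · rwa [sum_eq_sum_starWeight, sum_eq_sum_starWeight, hstar, Fintype.sum_update_lt_sum_iff]

end Galaxy

/-- On a galaxy graph of `n` stars, a configuration is losing for the player to
move iff the bitwise XOR of `p₁, …, pₙ` is zero, where `pᵢ` is the total weight
of the edges of the `i`-th star. -/
theorem galaxy_losing_iff (n : ℕ) (ℓ : Fin n → ℕ)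
    (w : (Σ i : Fin n, Fin (ℓ i)) → ℕ) :
    Losing (galaxyInc n ℓ) w ↔
      (List.ofFn fun i : Fin n => ∑ t : Fin (ℓ i), w ⟨i, t⟩).foldr (· ^^^ ·) 0 = 0 :=
  losing_iff_nimSum_eq_zero (galaxyInc n ℓ) starWeight
    (fun _ _ => exists_starWeight_eq_update_of_move)
    (fun w i _ => exists_move_starWeight_eq_update w i) w
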